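/- For any positive integer b with 0 < b < m, the element α_m(b) ∈ Z[G_m] defined via the case construction (Bezout decomposition when |J'_b| > 1, and the prime-power-layer formulas when |J'_b| = 1) is short and satisfies (1 + σ_{-1})·α_m(b) = N_m. -/

import Mathlib

open scoped BigOperators

noncomputable def theta (m : ℕ) [NeZero m] (a : ℤ) : MonoidAlgebra ℚ (ZMod m)ˣ :=
  ∑ s : (ZMod m)ˣ, MonoidAlgebra.single s⁻¹
    (Int.fract ((-(a * ((s : ZMod m).val : ℤ)) : ℤ) / (m : ℚ)))

noncomputable def Nelt (m : ℕ) [NeZero m] : MonoidAlgebra ℚ (ZMod m)ˣ :=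
  ∑ τ : (ZMod m)ˣ, MonoidAlgebra.single τ (1 : ℚ)

/-- An element of the group ring is short if all its coefficients lie in `{0, 1}`
(in particular it lies in `ℤ[G_m]`). -/
def IsShort {m : ℕ} [NeZero m] (x : MonoidAlgebra ℚ (ZMod m)ˣ) : Prop :=
  ∀ σ : (ZMod m)ˣ, x.coeff σ = 0 ∨ x.coeff σ = 1

/-- The element `α_m(b)` from the case construction: `J'_b = {i : q_i ∤ b}`,
`r_b = ∏_{q_i ∣ b} q_i`.  If `|J'_b| > 1`, take `u = q_{min J'_b}`, `v = m/(u r_b)` and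
any Bezout pair `u x + v y = -1`, and `α_m(b) = θ_m(b) + θ_m(bux) + θ_m(bvy) - N_m`.
If `J'_b = {j}` and `b = m c / q_j` with `c > 1` (i.e. `b > m / q_j`), then
`α_m(b) = θ_m(-b) + θ_m(b - m/q_j) + θ_m(m/q_j) - N_m`; if `c = 1` (i.e. `b = m / q_j`),
then `α_m(b) = 2 θ_m(m φ(q_j)/(2 q_j)) + θ_m(m / p_j) - N_m`. -/
def IsAlpha (m t : ℕ) [NeZero m] (q : Fin t → ℕ) (b : ℕ)
    (α : MonoidAlgebra ℚ (ZMod m)ˣ) : Prop :=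
  let J' : Finset (Fin t) := Finset.univ.filter (fun i => ¬ q i ∣ b)
  let rb : ℕ := ∏ i ∈ Finset.univ.filter (fun i => q i ∣ b), q i
  (1 < J'.card ∧ ∃ j ∈ J', (∀ i ∈ J', j ≤ i) ∧ ∃ x y : ℤ,
      (q j : ℤ) * x + ((m / (q j * rb) : ℕ) : ℤ) * y = -1 ∧
      α = theta m (b : ℤ) + theta m ((b : ℤ) * (q j : ℤ) * x)
            + theta m ((b : ℤ) * ((m / (q j * rb) : ℕ) : ℤ) * y) - Nelt m)
  ∨ (∃ j : Fin t, J' = {j} ∧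
      ((m / q j < b ∧
          α = theta m (-(b : ℤ)) + theta m ((b : ℤ) - ((m / q j : ℕ) : ℤ))
                + theta m (((m / q j : ℕ) : ℤ)) - Nelt m)
        ∨ (b = m / q j ∧
          α = 2 • theta m (((m * Nat.totient (q j) / (2 * q j) : ℕ) : ℤ))
                + theta m (((m / (q j).minFac : ℕ) : ℤ)) - Nelt m)))

/-! ### Auxiliary lemmas -/

lemma theta_apply (m : ℕ) [NeZero m] (a : ℤ) (g : (ZMod m)ˣ) :
    (theta m a).coeff g = ((-(a * (((g⁻¹ : (ZMod m)ˣ) : ZMod m).val : ℤ)) % (m : ℤ) : ℤ) : ℚ) / (m : ℚ) := by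
  classical
  rw [theta, MonoidAlgebra.coeff_sum, Finsupp.finset_sum_apply]
  simp only [MonoidAlgebra.coeff_single]
  rw [Finset.sum_eq_single g⁻¹]
  · rw [Finsupp.single_apply, if_pos (inv_inv g ▸ rfl), Int.fract_div_intCast_eq_div_intCast_mod]
  · intro s _ hs
    rw [Finsupp.single_apply, if_neg]
    intro h; exact hs (by rw [← h, inv_inv])
  · intro h; exact absurd (Finset.mem_univ _) h

lemma Nelt_apply (m : ℕ) [NeZero m] (g : (ZMod m)ˣ) : (Nelt m).coeff g = 1 := by
  classical
  rw [Nelt, MonoidAlgebra.coeff_sum, Finsupp.finset_sum_apply, Finset.sum_eq_single g]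
  · simp
  · intro s _ hs; simp [Finsupp.single_apply, hs]
  · intro h; exact absurd (Finset.mem_univ _) h

lemma mod_pair (m K : ℤ) (h0 : 0 < m) (h : ¬ m ∣ K) : K % m + (-K) % m = m := by
  have h1 := Int.emod_nonneg K h0.ne'
  have h2 := Int.emod_lt_of_pos K h0
  have h3 := Int.emod_nonneg (-K) h0.ne'
  have h4 := Int.emod_lt_of_pos (-K) h0
  have e1 := Int.emod_add_mul_ediv K m
  have e2 := Int.emod_add_mul_ediv (-K) m
  have hne : 0 < K % m := lt_of_le_of_ne h1 (fun hc => h (Int.dvd_of_emod_eq_zero hc.symm))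
  set c : ℤ := -(K / m) - (-K) / m with hcdef
  have hc : K % m + (-K) % m = m * c := by rw [hcdef]; linear_combination e1 + e2
  have hc2 : c < 2 := by
    have : m * c < m * 2 := by linarith
    exact (mul_lt_mul_iff_right₀ h0).mp this
  have hc0 : 0 < c := by
    have : m * 0 < m * c := by linarith
    exact (mul_lt_mul_iff_right₀ h0).mp this
  have : c = 1 := by omega
  rw [this, mul_one] at hc; linarith

lemma mod_triple (m K1 K2 K3 : ℤ) (h0 : 0 < m) (hd : m ∣ (K1 + K2 + K3))
    (h : ¬ m ∣ K1) :
    K1 % m + K2 % m + K3 % m = m ∨ K1 % m + K2 % m + K3 % m = 2 * m := by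
  have h1 := Int.emod_nonneg K1 h0.ne'
  have h2 := Int.emod_lt_of_pos K1 h0
  have h3 := Int.emod_nonneg K2 h0.ne'
  have h4 := Int.emod_lt_of_pos K2 h0
  have h5 := Int.emod_nonneg K3 h0.ne'
  have h6 := Int.emod_lt_of_pos K3 h0
  have e1 := Int.emod_add_mul_ediv K1 m
  have e2 := Int.emod_add_mul_ediv K2 m
  have e3 := Int.emod_add_mul_ediv K3 m
  have hne : 0 < K1 % m := lt_of_le_of_ne h1 (fun hc => h (Int.dvd_of_emod_eq_zero hc.symm))
  obtain ⟨e, he⟩ := hd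
  set c : ℤ := e - K1 / m - K2 / m - K3 / m with hcdef
  have hc : K1 % m + K2 % m + K3 % m = m * c := by
    rw [hcdef]; linear_combination e1 + e2 + e3 + he
  have hc3 : c < 3 := by
    have : m * c < m * 3 := by linarith
    exact (mul_lt_mul_iff_right₀ h0).mp this
  have hc0 : 0 < c := by
    have : m * 0 < m * c := by linarith
    exact (mul_lt_mul_iff_right₀ h0).mp this
  have : c = 1 ∨ c = 2 := by omega
  rcases this with h' | h' <;> rw [h'] at hc <;> [left; right] <;> linarith

lemma mod_two_one (m K1 K2 : ℤ) (h0 : 0 < m) (hd : m ∣ (2 * K1 + K2))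
    (h : ¬ m ∣ K2) :
    2 * (K1 % m) + K2 % m = m ∨ 2 * (K1 % m) + K2 % m = 2 * m := by
  have h1 := Int.emod_nonneg K1 h0.ne'
  have h2 := Int.emod_lt_of_pos K1 h0
  have h3 := Int.emod_nonneg K2 h0.ne'
  have h4 := Int.emod_lt_of_pos K2 h0
  have e1 := Int.emod_add_mul_ediv K1 m
  have e2 := Int.emod_add_mul_ediv K2 m
  have hne : 0 < K2 % m := lt_of_le_of_ne h3 (fun hc => h (Int.dvd_of_emod_eq_zero hc.symm))
  obtain ⟨e, he⟩ := hd
  set c : ℤ := e - 2 * (K1 / m) - K2 / m with hcdef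
  have hc : 2 * (K1 % m) + K2 % m = m * c := by
    rw [hcdef]; linear_combination 2 * e1 + e2 + he
  have hc3 : c < 3 := by
    have : m * c < m * 3 := by linarith
    exact (mul_lt_mul_iff_right₀ h0).mp this
  have hc0 : 0 < c := by
    have : m * 0 < m * c := by linarith
    exact (mul_lt_mul_iff_right₀ h0).mp this
  have : c = 1 ∨ c = 2 := by omega
  rcases this with h' | h' <;> rw [h'] at hc <;> [left; right] <;> linarith

lemma sval_add (m : ℕ) [NeZero m] (g : (ZMod m)ˣ) :
    (m : ℤ) ∣ ((((g⁻¹ : (ZMod m)ˣ) : ZMod m).val : ℤ) + ((((-g)⁻¹ : (ZMod m)ˣ) : ZMod m).val : ℤ)) := by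
  rw [← ZMod.intCast_zmod_eq_zero_iff_dvd]
  push_cast
  have hneg : (-g)⁻¹ = -g⁻¹ := by
    apply inv_eq_of_mul_eq_one_right
    simp
  rw [hneg]
  simp [ZMod.natCast_val, ZMod.cast_id]

lemma not_dvd_mul_sval (m : ℕ) [NeZero m] (a : ℤ) (ha : ¬ (m : ℤ) ∣ a) (g : (ZMod m)ˣ) :
    ¬ (m : ℤ) ∣ a * (((g⁻¹ : (ZMod m)ˣ) : ZMod m).val : ℤ) := by
  intro h
  have hcop : Nat.Coprime (((g⁻¹ : (ZMod m)ˣ) : ZMod m).val) m := ZMod.val_coe_unit_coprime g⁻¹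
  have : IsCoprime ((m : ℤ)) ((((g⁻¹ : (ZMod m)ˣ) : ZMod m).val : ℤ)) :=
    Nat.isCoprime_iff_coprime.mpr hcop.symm
  exact ha (this.dvd_of_dvd_mul_right h)

lemma theta_pair (m : ℕ) [NeZero m] (a : ℤ) (ha : ¬ (m : ℤ) ∣ a) (g : (ZMod m)ˣ) :
    (theta m a).coeff g + (theta m a).coeff (-g) = 1 := by
  have h0 : (0 : ℤ) < m := by exact_mod_cast Nat.pos_of_ne_zero (NeZero.ne m)
  rw [theta_apply, theta_apply]
  set s : ℤ := (((g⁻¹ : (ZMod m)ˣ) : ZMod m).val : ℤ) with hs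
  set s' : ℤ := ((((-g)⁻¹ : (ZMod m)ˣ) : ZMod m).val : ℤ) with hs'
  have hdvd : (m : ℤ) ∣ (a * s - -(a * s')) := by
    have := sval_add m g
    obtain ⟨c, hc⟩ := this
    exact ⟨a * c, by rw [← hs, ← hs'] at hc; linear_combination a * hc⟩
  have hmod : (-(a * s')) % (m : ℤ) = (a * s) % (m : ℤ) := by
    have := Int.modEq_iff_dvd.mpr hdvd
    unfold Int.ModEq at this
    exact this
  rw [hmod]
  have hK : ¬ (m : ℤ) ∣ a * s := not_dvd_mul_sval m a ha g
  have hp := mod_pair (m : ℤ) (a * s) h0 hK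
  have hm0 : (m : ℚ) ≠ 0 := by exact_mod_cast (NeZero.ne m)
  rw [← add_div]
  rw [div_eq_one_iff_eq hm0]
  have : (-(a * s)) % (m:ℤ) + (a * s) % (m:ℤ) = m := by
    rw [add_comm]; exact hp
  exact_mod_cast this

lemma sig_apply (m : ℕ) [NeZero m] (x : MonoidAlgebra ℚ (ZMod m)ˣ) (g : (ZMod m)ˣ) :
    ((1 + MonoidAlgebra.single (-1 : (ZMod m)ˣ) (1 : ℚ)) * x).coeff g = x.coeff g + x.coeff (-g) := by
  have h1 : ((-1 : (ZMod m)ˣ))⁻¹ = -1 := by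
    apply inv_eq_of_mul_eq_one_right; simp
  rw [add_mul, one_mul, MonoidAlgebra.coeff_add, Finsupp.add_apply, MonoidAlgebra.coeff_single_mul_apply, h1, one_mul,
    neg_one_mul]

lemma not_dvd_int (m : ℕ) (K : ℤ) (h0 : 0 < K) (h1 : K < (m : ℤ)) : ¬ (m : ℤ) ∣ K :=
  fun h => by have := Int.le_of_dvd h0 h; omega

lemma short3 (m : ℕ) [NeZero m] (a1 a2 a3 : ℤ) (hd : (m : ℤ) ∣ (a1 + a2 + a3))
    (h1 : ¬ (m : ℤ) ∣ a1) (g : (ZMod m)ˣ) :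
    (theta m a1).coeff g + (theta m a2).coeff g + (theta m a3).coeff g - 1 = 0 ∨
      (theta m a1).coeff g + (theta m a2).coeff g + (theta m a3).coeff g - 1 = 1 := by
  have h0 : (0 : ℤ) < m := by exact_mod_cast Nat.pos_of_ne_zero (NeZero.ne m)
  have hm0 : (m : ℚ) ≠ 0 := by exact_mod_cast (NeZero.ne m)
  rw [theta_apply, theta_apply, theta_apply]
  set s : ℤ := (((g⁻¹ : (ZMod m)ˣ) : ZMod m).val : ℤ) with hs
  have hdK : (m : ℤ) ∣ (-(a1 * s) + -(a2 * s) + -(a3 * s)) := by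
    obtain ⟨c, hc⟩ := hd
    exact ⟨-(c * s), by linear_combination (-s) * hc⟩
  have hK1 : ¬ (m : ℤ) ∣ -(a1 * s) := by
    rw [dvd_neg]; exact not_dvd_mul_sval m a1 h1 g
  have := mod_triple (m : ℤ) (-(a1 * s)) (-(a2 * s)) (-(a3 * s)) h0 hdK hK1
  rcases this with h' | h'
  · left
    have h'' : ((-(a1 * s) % (m:ℤ) : ℤ) : ℚ) + ((-(a2 * s) % (m:ℤ) : ℤ) : ℚ)
        + ((-(a3 * s) % (m:ℤ) : ℤ) : ℚ) = (m : ℚ) := by exact_mod_cast h'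
    field_simp
    linarith
  · right
    have h'' : ((-(a1 * s) % (m:ℤ) : ℤ) : ℚ) + ((-(a2 * s) % (m:ℤ) : ℤ) : ℚ)
        + ((-(a3 * s) % (m:ℤ) : ℤ) : ℚ) = 2 * (m : ℚ) := by exact_mod_cast h'
    field_simp
    linarith

lemma short21 (m : ℕ) [NeZero m] (a1 a2 : ℤ) (hd : (m : ℤ) ∣ (2 * a1 + a2))
    (h2 : ¬ (m : ℤ) ∣ a2) (g : (ZMod m)ˣ) :
    2 * (theta m a1).coeff g + (theta m a2).coeff g - 1 = 0 ∨
      2 * (theta m a1).coeff g + (theta m a2).coeff g - 1 = 1 := by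
  have h0 : (0 : ℤ) < m := by exact_mod_cast Nat.pos_of_ne_zero (NeZero.ne m)
  have hm0 : (m : ℚ) ≠ 0 := by exact_mod_cast (NeZero.ne m)
  rw [theta_apply, theta_apply]
  set s : ℤ := (((g⁻¹ : (ZMod m)ˣ) : ZMod m).val : ℤ) with hs
  have hdK : (m : ℤ) ∣ (2 * -(a1 * s) + -(a2 * s)) := by
    obtain ⟨c, hc⟩ := hd
    exact ⟨-(c * s), by linear_combination (-s) * hc⟩
  have hK2 : ¬ (m : ℤ) ∣ -(a2 * s) := by
    rw [dvd_neg]; exact not_dvd_mul_sval m a2 h2 g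
  have := mod_two_one (m : ℤ) (-(a1 * s)) (-(a2 * s)) h0 hdK hK2
  rcases this with h' | h'
  · left
    have h'' : 2 * ((-(a1 * s) % (m:ℤ) : ℤ) : ℚ) + ((-(a2 * s) % (m:ℤ) : ℤ) : ℚ)
        = (m : ℚ) := by exact_mod_cast h'
    field_simp
    linarith
  · right
    have h'' : 2 * ((-(a1 * s) % (m:ℤ) : ℤ) : ℚ) + ((-(a2 * s) % (m:ℤ) : ℤ) : ℚ)
        = 2 * (m : ℚ) := by exact_mod_cast h'
    field_simp
    linarith

lemma ma_add_apply {m : ℕ} [NeZero m] (x y : MonoidAlgebra ℚ (ZMod m)ˣ) (g : (ZMod m)ˣ) :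
    (x + y).coeff g = x.coeff g + y.coeff g := rfl

lemma ma_sub_apply {m : ℕ} [NeZero m] (x y : MonoidAlgebra ℚ (ZMod m)ˣ) (g : (ZMod m)ˣ) :
    (x - y).coeff g = x.coeff g - y.coeff g := rfl

lemma ma_smul_apply {m : ℕ} [NeZero m] (x : MonoidAlgebra ℚ (ZMod m)ˣ) (g : (ZMod m)ˣ) :
    (2 • x).coeff g = 2 * (x.coeff g) := by
  show 2 • (x.coeff g) = 2 * (x.coeff g)
  rw [nsmul_eq_mul, Nat.cast_ofNat]

lemma main3 (m : ℕ) [NeZero m] (a1 a2 a3 : ℤ) (hd : (m : ℤ) ∣ (a1 + a2 + a3))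
    (h1 : ¬ (m : ℤ) ∣ a1) (h2 : ¬ (m : ℤ) ∣ a2) (h3 : ¬ (m : ℤ) ∣ a3) :
    IsShort (theta m a1 + theta m a2 + theta m a3 - Nelt m) ∧
      (1 + MonoidAlgebra.single (-1 : (ZMod m)ˣ) (1 : ℚ)) *
        (theta m a1 + theta m a2 + theta m a3 - Nelt m) = Nelt m := by
  constructor
  · intro g
    have h := short3 m a1 a2 a3 hd h1 g
    rw [ma_sub_apply, ma_add_apply, ma_add_apply, Nelt_apply]
    exact h
  · refine MonoidAlgebra.coeff_injective (Finsupp.ext fun g => ?_)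
    rw [sig_apply]
    simp only [ma_sub_apply, ma_add_apply, Nelt_apply]
    have p1 := theta_pair m a1 h1 g
    have p2 := theta_pair m a2 h2 g
    have p3 := theta_pair m a3 h3 g
    linarith

lemma main21 (m : ℕ) [NeZero m] (a1 a2 : ℤ) (hd : (m : ℤ) ∣ (2 * a1 + a2))
    (h1 : ¬ (m : ℤ) ∣ a1) (h2 : ¬ (m : ℤ) ∣ a2) :
    IsShort (2 • theta m a1 + theta m a2 - Nelt m) ∧
      (1 + MonoidAlgebra.single (-1 : (ZMod m)ˣ) (1 : ℚ)) *
        (2 • theta m a1 + theta m a2 - Nelt m) = Nelt m := by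
  constructor
  · intro g
    have h := short21 m a1 a2 hd h2 g
    rw [ma_sub_apply, ma_add_apply, ma_smul_apply, Nelt_apply]
    exact h
  · refine MonoidAlgebra.coeff_injective (Finsupp.ext fun g => ?_)
    rw [sig_apply]
    simp only [ma_sub_apply, ma_add_apply, ma_smul_apply, Nelt_apply]
    have p1 := theta_pair m a1 h1 g
    have p2 := theta_pair m a2 h2 g
    linarith

theorem stmt13 (m t : ℕ) [NeZero m] (hm : 1 < m) (hm4 : m % 4 ≠ 2)
    (q : Fin t → ℕ) (hq : ∀ i, IsPrimePow (q i) ∧ 2 < q i)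
    (hcop : ∀ i j, i ≠ j → Nat.Coprime (q i) (q j))
    (hprod : m = ∏ i, q i)
    (b : ℕ) (hb0 : 0 < b) (hbm : b < m)
    (α : MonoidAlgebra ℚ (ZMod m)ˣ) (hα : IsAlpha m t q b α) :
    IsShort α ∧
      (1 + MonoidAlgebra.single (-1 : (ZMod m)ˣ) (1 : ℚ)) * α = Nelt m := by
  classical
  have hmpos : 0 < m := by omega
  have hbZ : ¬ (m : ℤ) ∣ (b : ℤ) :=
    not_dvd_int m b (by exact_mod_cast hb0) (by exact_mod_cast hbm)
  have hqpos : ∀ i, 0 < q i := fun i => by have := (hq i).2; omega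
  rcases hα with ⟨hcard, j, hjJ, hmin, x, y, hxy, rfl⟩ | ⟨j, hJ, hcase⟩
  · -- Case 1 : |J'| > 1
    set S : Finset (Fin t) := Finset.univ.filter (fun i => q i ∣ b) with hS
    set rb : ℕ := ∏ i ∈ S, q i with hrb
    set v : ℕ := m / (q j * rb) with hv
    have hjdvd : ¬ q j ∣ b := (Finset.mem_filter.mp hjJ).2
    have hjS : j ∉ S := by
      intro h; exact hjdvd (Finset.mem_filter.mp h).2
    have hdvd_m : q j * rb ∣ m := by
      rw [hprod]
      have h1 : q j * rb = ∏ i ∈ insert j S, q i := (Finset.prod_insert hjS).symm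
      rw [h1]
      exact Finset.prod_dvd_prod_of_subset _ _ _ (Finset.subset_univ _)
    have hveq : v * (q j * rb) = m := Nat.div_mul_cancel hdvd_m
    obtain ⟨i, hiJ, hij⟩ := Finset.exists_mem_ne hcard j
    have hidvd : ¬ q i ∣ b := (Finset.mem_filter.mp hiJ).2
    have him : q i ∣ m := hprod ▸ Finset.dvd_prod_of_mem q (Finset.mem_univ i)
    have hjm : q j ∣ m := hprod ▸ Finset.dvd_prod_of_mem q (Finset.mem_univ j)
    have hcoprb : Nat.Coprime (q i) rb := by
      rw [hrb]
      apply Nat.Coprime.prod_right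
      intro k hk
      apply hcop
      intro hik
      exact hidvd (hik ▸ (Finset.mem_filter.mp hk).2)
    have hcopQ : Nat.Coprime (q i) (q j * rb) := Nat.Coprime.mul_right (hcop i j hij) hcoprb
    have hqiv : q i ∣ v := hcopQ.dvd_of_dvd_mul_right (hveq ▸ him)
    have hN2 : (m : ℤ) ∣ ((b : ℤ) + (b : ℤ) * (q j : ℤ) * x + (b : ℤ) * (v : ℤ) * y) := by
      have : (b : ℤ) + (b : ℤ) * (q j : ℤ) * x + (b : ℤ) * (v : ℤ) * y = 0 := by
        linear_combination (b : ℤ) * hxy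
      rw [this]
      exact dvd_zero _
    have hN3 : ¬ (m : ℤ) ∣ ((b : ℤ) * (q j : ℤ) * x) := by
      intro h
      have hqi : ((q i : ℕ) : ℤ) ∣ (b : ℤ) * ((q j : ℤ) * x) := by
        rw [← mul_assoc]
        exact dvd_trans (Int.natCast_dvd_natCast.mpr him) h
      obtain ⟨w, hw⟩ : ((q i : ℕ) : ℤ) ∣ ((v : ℕ) : ℤ) := Int.natCast_dvd_natCast.mpr hqiv
      have hco : IsCoprime ((q i : ℕ) : ℤ) ((q j : ℤ) * x) :=
        ⟨-(w * y), -1, by linear_combination -hxy + y * hw⟩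
      have : ((q i : ℕ) : ℤ) ∣ (b : ℤ) := hco.dvd_of_dvd_mul_right hqi
      exact hidvd (Int.natCast_dvd_natCast.mp this)
    have hN4 : ¬ (m : ℤ) ∣ ((b : ℤ) * (v : ℤ) * y) := by
      intro h
      have hqj : ((q j : ℕ) : ℤ) ∣ (b : ℤ) * ((v : ℤ) * y) := by
        rw [← mul_assoc]
        exact dvd_trans (Int.natCast_dvd_natCast.mpr hjm) h
      have hco : IsCoprime ((q j : ℕ) : ℤ) ((v : ℤ) * y) :=
        ⟨-x, -1, by linear_combination -hxy⟩
      have : ((q j : ℕ) : ℤ) ∣ (b : ℤ) := hco.dvd_of_dvd_mul_right hqj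
      exact hjdvd (Int.natCast_dvd_natCast.mp this)
    exact main3 m _ _ _ hN2 hbZ hN3 hN4
  · -- Case 2 : J' = {j}
    have hjm : q j ∣ m := hprod ▸ Finset.dvd_prod_of_mem q (Finset.mem_univ j)
    have hcpos : 0 < m / q j := Nat.div_pos (Nat.le_of_dvd hmpos hjm) (hqpos j)
    have hclt : m / q j < m := Nat.div_lt_self hmpos (by have := (hq j).2; omega)
    rcases hcase with ⟨hlt, rfl⟩ | ⟨hbc, rfl⟩
    · -- subcase c > 1
      have h1 : ¬ (m : ℤ) ∣ (-(b : ℤ)) := by rw [dvd_neg]; exact hbZ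
      have h2 : ¬ (m : ℤ) ∣ ((b : ℤ) - ((m / q j : ℕ) : ℤ)) := by
        apply not_dvd_int
        · have h1 : ((m / q j : ℕ) : ℤ) < (b : ℤ) := by exact_mod_cast hlt
          omega
        · have h2 : ((m / q j : ℕ) : ℤ) > 0 := by exact_mod_cast hcpos
          have h3 : (b : ℤ) < (m : ℤ) := by exact_mod_cast hbm
          omega
      have h3 : ¬ (m : ℤ) ∣ ((m / q j : ℕ) : ℤ) :=
        not_dvd_int m _ (by exact_mod_cast hcpos) (by exact_mod_cast hclt)
      have hd : (m : ℤ) ∣ (-(b : ℤ) + ((b : ℤ) - ((m / q j : ℕ) : ℤ)) + ((m / q j : ℕ) : ℤ)) := by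
        have : -(b : ℤ) + ((b : ℤ) - ((m / q j : ℕ) : ℤ)) + ((m / q j : ℕ) : ℤ) = 0 := by ring
        rw [this]; exact dvd_zero _
      exact main3 m _ _ _ hd h1 h2 h3
    · -- subcase c = 1
      obtain ⟨p, k, hpp, hk, hpk⟩ := (hq j).1
      have hpnat : p.Prime := Nat.prime_iff.mpr hpp
      have hminFac : (q j).minFac = p := by rw [← hpk]; exact hpnat.pow_minFac hk.ne'
      obtain ⟨k', rfl⟩ : ∃ k', k = k' + 1 := ⟨k - 1, by omega⟩
      set M : ℕ := m / q j with hM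
      have hMQ : m = q j * M := (Nat.mul_div_cancel' hjm).symm
      obtain ⟨e, he⟩ := Nat.totient_even (hq j).2
      have hphi : (q j).totient = p ^ k' * (p - 1) := by
        rw [← hpk, Nat.totient_prime_pow hpnat (by omega)]
        simp
      have h2e : 2 * e = p ^ k' * (p - 1) := by rw [two_mul, ← he, hphi]
      set d : ℕ := m * (q j).totient / (2 * q j) with hd
      have hde : d = M * e := by
        rw [hd]
        apply Nat.div_eq_of_eq_mul_left (by have := hqpos j; omega)
        rw [hMQ, he]; ring
      have hmp : m / p = p ^ k' * M := by
        apply Nat.div_eq_of_eq_mul_left hpnat.pos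
        rw [hMQ, ← hpk]; ring
      have hsucc : p - 1 + 1 = p := Nat.succ_pred_eq_of_pos hpnat.pos
      have hd2 : 2 * d + m / p = m := by
        rw [hde, hmp]
        calc 2 * (M * e) + p ^ k' * M = M * (2 * e) + p ^ k' * M := by ring
          _ = M * (p ^ k' * (p - 1)) + p ^ k' * M := by rw [h2e]
          _ = (p ^ k' * M) * ((p - 1) + 1) := by ring
          _ = (p ^ k' * M) * p := by rw [hsucc]
          _ = p ^ (k' + 1) * M := by ring
          _ = q j * M := by rw [hpk]
          _ = m := hMQ.symm
      have hMpos : 0 < M := hcpos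
      have hepos : 0 < e := by
        have := Nat.totient_pos.mpr (hqpos j)
        omega
      have hdpos : 0 < d := by rw [hde]; exact Nat.mul_pos hMpos hepos
      have hdlt : d < m := by
        rw [hde, hMQ]
        have heq : e < q j := by
          have := Nat.totient_lt (q j) (by have := (hq j).2; omega)
          omega
        calc M * e < M * q j := mul_lt_mul_of_pos_left heq hMpos
          _ = q j * M := by ring
      have hpm : p ∣ m :=
        dvd_trans (by rw [← hpk]; exact dvd_pow_self p (by omega)) hjm
      have hppos : 0 < m / p := Nat.div_pos (Nat.le_of_dvd hmpos hpm) hpnat.pos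
      have hplt : m / p < m := Nat.div_lt_self hmpos hpnat.one_lt
      have h1 : ¬ (m : ℤ) ∣ ((d : ℕ) : ℤ) :=
        not_dvd_int m _ (by exact_mod_cast hdpos) (by exact_mod_cast hdlt)
      have h2 : ¬ (m : ℤ) ∣ ((m / p : ℕ) : ℤ) :=
        not_dvd_int m _ (by exact_mod_cast hppos) (by exact_mod_cast hplt)
      have hdd : (m : ℤ) ∣ (2 * ((d : ℕ) : ℤ) + ((m / p : ℕ) : ℤ)) := by
        have : 2 * ((d : ℕ) : ℤ) + ((m / p : ℕ) : ℤ) = (m : ℤ) := by exact_mod_cast hd2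
        rw [this]
      rw [hminFac]
      exact main21 m _ _ hdd h1 h2
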